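/- Let D and D' be division rings, and let n, m', n' be integers with m', n' ≥ n ≥ 2. Suppose φ : D^{n×n} → D'^{m'×n'} is a graph homomorphism with φ(0) = 0 and there exists A₀ ∈ D^{n×n} with rank(φ(A₀)) = n. Assume M is a maximal set in D^{n×n} containing 0 and φ(M) ⊆ M', where M' is a maximal set in D'^{m'×n'}. Then φ(M) is not contained in any line of the affine geometry AG(M'), and M' is the unique maximal set of D'^{m'×n'} containing φ(M). -/

import Mathlib

open Matrix Function

/-- The rank of a matrix over a division ring: the dimension of its left row space. -/
noncomputable def rk {D : Type*} [DivisionRing D] {m n : ℕ}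
    (A : Matrix (Fin m) (Fin n) D) : ℕ :=
  Module.finrank D (Submodule.span D (Set.range fun i => A i))

/-- A nonempty set of matrices, any two distinct members of which are adjacent
(`rk (A - B) = 1`). -/
def IsAdjSet {D : Type*} [DivisionRing D] {m n : ℕ}
    (S : Set (Matrix (Fin m) (Fin n) D)) : Prop :=
  S.Nonempty ∧ ∀ A ∈ S, ∀ B ∈ S, A ≠ B → rk (A - B) = 1

/-- A maximal set: an adjacent set which is maximal under inclusion. -/
def IsMaxSet {D : Type*} [DivisionRing D] {m n : ℕ}
    (S : Set (Matrix (Fin m) (Fin n) D)) : Prop :=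
  IsAdjSet S ∧ ∀ T : Set (Matrix (Fin m) (Fin n) D), IsAdjSet T → S ⊆ T → T = S

/-- `M₁`: matrices whose rows other than the first are zero. -/
def M1set (D : Type*) [DivisionRing D] (m n : ℕ) : Set (Matrix (Fin m) (Fin n) D) :=
  {X | ∀ (i : Fin m) (j : Fin n), (i : ℕ) ≠ 0 → X i j = 0}

/-- `N₁`: matrices whose columns other than the first are zero. -/
def N1set (D : Type*) [DivisionRing D] (m n : ℕ) : Set (Matrix (Fin m) (Fin n) D) :=
  {X | ∀ (i : Fin m) (j : Fin n), (j : ℕ) ≠ 0 → X i j = 0}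

/-- A maximal set of type one: `P·M₁ + A` with `P` invertible. -/
def IsTypeOne {D : Type*} [DivisionRing D] {m n : ℕ}
    (S : Set (Matrix (Fin m) (Fin n) D)) : Prop :=
  ∃ (P : Matrix (Fin m) (Fin m) D) (A : Matrix (Fin m) (Fin n) D),
    IsUnit P ∧ S = (fun X => P * X + A) '' M1set D m n

/-- A maximal set of type two: `N₁·Q + A` with `Q` invertible. -/
def IsTypeTwo {D : Type*} [DivisionRing D] {m n : ℕ}
    (S : Set (Matrix (Fin m) (Fin n) D)) : Prop :=
  ∃ (Q : Matrix (Fin n) (Fin n) D) (A : Matrix (Fin m) (Fin n) D),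
    IsUnit Q ∧ S = (fun X => X * Q + A) '' N1set D m n

/-- Two maximal sets of different types. -/
def DiffTypes {D : Type*} [DivisionRing D] {m n : ℕ}
    (M N : Set (Matrix (Fin m) (Fin n) D)) : Prop :=
  (IsTypeOne M ∧ IsTypeTwo N) ∨ (IsTypeTwo M ∧ IsTypeOne N)

/-- The unit ball `B_A = D^{m×n}_{≤1} + A`. -/
def uball {D : Type*} [DivisionRing D] {m n : ℕ}
    (A : Matrix (Fin m) (Fin n) D) : Set (Matrix (Fin m) (Fin n) D) :=
  {X | rk (X - A) ≤ 1}

/-- A graph homomorphism: adjacency-preserving map. -/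
def IsGraphHom {D D' : Type*} [DivisionRing D] [DivisionRing D'] {m n m' n' : ℕ}
    (φ : Matrix (Fin m) (Fin n) D → Matrix (Fin m') (Fin n') D') : Prop :=
  ∀ A B, rk (A - B) = 1 → rk (φ A - φ B) = 1

/-- A degenerate graph homomorphism. -/
def Degenerate {D D' : Type*} [DivisionRing D] [DivisionRing D'] {m n m' n' : ℕ}
    (φ : Matrix (Fin m) (Fin n) D → Matrix (Fin m') (Fin n') D') : Prop :=
  ∃ (A : Matrix (Fin m) (Fin n) D) (M N : Set (Matrix (Fin m') (Fin n') D')),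
    rk A ≤ 1 ∧ DiffTypes M N ∧ φ '' uball A ⊆ M ∪ N ∧ φ A ∈ M ∩ N

/-- A (vertex) colouring: the image is an adjacent set. -/
def IsColouring {D D' : Type*} [DivisionRing D] [DivisionRing D'] {m n m' n' : ℕ}
    (φ : Matrix (Fin m) (Fin n) D → Matrix (Fin m') (Fin n') D') : Prop :=
  IsAdjSet (Set.range φ)

/-- A nonzero ring homomorphism. -/
def IsRingHomNZ {D D' : Type*} [DivisionRing D] [DivisionRing D'] (τ : D → D') : Prop :=
  (∀ x y, τ (x + y) = τ x + τ y) ∧ (∀ x y, τ (x * y) = τ x * τ y) ∧ τ ≠ 0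

/-- A nonzero ring anti-homomorphism. -/
def IsAntiRingHomNZ {D D' : Type*} [DivisionRing D] [DivisionRing D'] (σ : D → D') : Prop :=
  (∀ x y, σ (x + y) = σ x + σ y) ∧ (∀ x y, σ (x * y) = σ y * σ x) ∧ σ ≠ 0

/-- The `m × n` matrix with the matrix `Y` in the upper-left corner and zeros elsewhere. -/
def corner {D : Type*} [Zero D] {k l m n : ℕ} (Y : Matrix (Fin k) (Fin l) D) :
    Matrix (Fin m) (Fin n) D :=
  Matrix.of fun i j =>
    if hi : (i : ℕ) < k then if hj : (j : ℕ) < l then Y ⟨i, hi⟩ ⟨j, hj⟩ else 0 else 0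

/-- A line of the affine geometry `AG(M)` of a maximal set `M`: a nonempty intersection
`M ∩ N` with `N` a maximal set of the other type. -/
def IsLine {D : Type*} [DivisionRing D] {m n : ℕ}
    (M ℓ : Set (Matrix (Fin m) (Fin n) D)) : Prop :=
  ∃ N : Set (Matrix (Fin m) (Fin n) D), DiffTypes M N ∧ (M ∩ N).Nonempty ∧ ℓ = M ∩ N

/-- Condition (I). -/
def CondI {D D' : Type*} [DivisionRing D] [DivisionRing D'] {m n m' n' : ℕ}
    (φ : Matrix (Fin m) (Fin n) D → Matrix (Fin m') (Fin n') D') : Prop :=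
  ∀ M N : Set (Matrix (Fin m) (Fin n) D), DiffTypes M N → (0 : Matrix (Fin m) (Fin n) D) ∈ M ∩ N →
    ∃ M' N' : Set (Matrix (Fin m') (Fin n') D'),
      DiffTypes M' N' ∧ φ '' M ⊆ M' ∧ φ '' N ⊆ N'

/-- Condition (i) of the additive homomorphism theorem: `φ(X) = P X^τ Q`. -/
def Cond1 {D D' : Type*} [DivisionRing D] [DivisionRing D'] {m n m' n' : ℕ}
    (φ : Matrix (Fin m) (Fin n) D → Matrix (Fin m') (Fin n') D') : Prop :=
  ∃ (P : Matrix (Fin m') (Fin m) D') (Q : Matrix (Fin n) (Fin n') D') (τ : D → D'),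
    2 ≤ rk P ∧ 2 ≤ rk Q ∧ IsRingHomNZ τ ∧ ∀ X, φ X = P * X.map τ * Q

/-- Condition (ii) of the additive homomorphism theorem: `φ(X) = P (ᵗX^σ) Q`. -/
def Cond2 {D D' : Type*} [DivisionRing D] [DivisionRing D'] {m n m' n' : ℕ}
    (φ : Matrix (Fin m) (Fin n) D → Matrix (Fin m') (Fin n') D') : Prop :=
  ∃ (P : Matrix (Fin m') (Fin n) D') (Q : Matrix (Fin m) (Fin n') D') (σ : D → D'),
    2 ≤ rk P ∧ 2 ≤ rk Q ∧ IsAntiRingHomNZ σ ∧ ∀ X, φ X = P * (X.map σ)ᵀ * Q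


/-!
A graph homomorphism contracts the rank distance `rk (X - Y)`. The maximal sets through `0` are
the sets `{u rᵀ}` and `{c vᵀ}`, and a line of `AG(M')` through `0` lies in some `{p (d q)ᵀ}`.
Since `rk φ(A₀) = n`, the matrix `A₀` is invertible, so `M` contains two points `B₁ ≠ B₂` with
`rk (A₀ - Bᵢ) < n`. Their images are distinct and both lower the rank of `φ(A₀)`, which two
distinct points `p (dᵢ q)ᵀ` of one line cannot do. Hence `φ(M)` lies in no line; so two maximal
sets containing `φ(M)` have the same type and share a nonzero point, which forces them to coincide.
-/

section Rank

variable {D : Type*} [DivisionRing D] {m n : ℕ}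

@[simp] lemma vecMulVec_zero_right (a : Fin m → D) : vecMulVec a (0 : Fin n → D) = 0 := by
  ext; simp [vecMulVec_apply]

lemma rk_eq_finrank_range (A : Matrix (Fin m) (Fin n) D) :
    rk A = Module.finrank D (LinearMap.range A.vecMulLinear) := by
  rw [range_vecMulLinear]; rfl

lemma vecMul_mem_range (t : Fin m → D) (A : Matrix (Fin m) (Fin n) D) :
    t ᵥ* A ∈ LinearMap.range A.vecMulLinear :=
  ⟨t, rfl⟩

lemma rk_add_finrank_ker (A : Matrix (Fin m) (Fin n) D) :
    rk A + Module.finrank D (LinearMap.ker A.vecMulLinear) = m := by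
  rw [rk_eq_finrank_range, LinearMap.finrank_range_add_finrank_ker, Module.finrank_fin_fun]

lemma rk_le_rows (A : Matrix (Fin m) (Fin n) D) : rk A ≤ m := by
  have := rk_add_finrank_ker A
  omega

lemma rk_le_cols (A : Matrix (Fin m) (Fin n) D) : rk A ≤ n := by
  simpa [rk_eq_finrank_range] using Submodule.finrank_le (LinearMap.range A.vecMulLinear)

lemma rk_eq_zero_iff {A : Matrix (Fin m) (Fin n) D} : rk A = 0 ↔ A = 0 := by
  rw [rk, Submodule.finrank_eq_zero, Submodule.span_eq_bot, Set.forall_mem_range]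
  exact funext_iff.symm

@[simp] lemma rk_zero : rk (0 : Matrix (Fin m) (Fin n) D) = 0 :=
  rk_eq_zero_iff.2 rfl

lemma rk_le_of_range_le {k : ℕ} {A : Matrix (Fin m) (Fin n) D} {B : Matrix (Fin k) (Fin n) D}
    (h : LinearMap.range A.vecMulLinear ≤ LinearMap.range B.vecMulLinear) : rk A ≤ rk B := by
  rw [rk_eq_finrank_range, rk_eq_finrank_range]
  exact Submodule.finrank_mono h

lemma rk_le_of_ker_le {A B : Matrix (Fin m) (Fin n) D}
    (h : LinearMap.ker B.vecMulLinear ≤ LinearMap.ker A.vecMulLinear) : rk A ≤ rk B := by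
  have := Submodule.finrank_mono h
  have := rk_add_finrank_ker A
  have := rk_add_finrank_ker B
  omega

lemma rk_add_le (A B : Matrix (Fin m) (Fin n) D) : rk (A + B) ≤ rk A + rk B := by
  rw [rk_eq_finrank_range, rk_eq_finrank_range, rk_eq_finrank_range]
  refine (Submodule.finrank_mono ?_).trans (Submodule.finrank_add_le_finrank_add_finrank _ _)
  rintro _ ⟨t, rfl⟩
  rw [vecMulLinear_apply, vecMul_add]
  exact Submodule.add_mem_sup (vecMul_mem_range t A) (vecMul_mem_range t B)

lemma rk_sub_le_add (A B C : Matrix (Fin m) (Fin n) D) :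
    rk (A - C) ≤ rk (A - B) + rk (B - C) := by
  simpa using rk_add_le (A - B) (B - C)

lemma rk_lt_of_vecMul_eq_zero {A : Matrix (Fin m) (Fin n) D} {t : Fin m → D} (ht : t ≠ 0)
    (h : t ᵥ* A = 0) : rk A < m := by
  have hker : LinearMap.ker A.vecMulLinear ≠ ⊥ :=
    fun hbot => ht ((Submodule.mem_bot D).1 (hbot ▸ h))
  have : Module.finrank D (LinearMap.ker A.vecMulLinear) ≠ 0 :=
    fun h0 => hker (Submodule.finrank_eq_zero.1 h0)
  have := rk_add_finrank_ker A
  omega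

lemma vecMul_injective_of_rk_eq {A : Matrix (Fin m) (Fin n) D} (h : rk A = m) :
    Function.Injective fun t => t ᵥ* A := by
  have := rk_add_finrank_ker A
  have hker : Module.finrank D (LinearMap.ker A.vecMulLinear) = 0 := by omega
  exact LinearMap.ker_eq_bot.1 (Submodule.finrank_eq_zero.1 hker)

lemma vecMul_surjective_of_rk_eq {A : Matrix (Fin m) (Fin n) D} (h : rk A = n) :
    Function.Surjective fun t => t ᵥ* A := by
  have hrange :
      Module.finrank D (LinearMap.range A.vecMulLinear) = Module.finrank D (Fin n → D) := by
    rw [← rk_eq_finrank_range, h, Module.finrank_fin_fun]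
  exact LinearMap.range_eq_top.1 (Submodule.eq_top_of_finrank_eq hrange)

lemma two_le_rk_of_mem_range {A : Matrix (Fin m) (Fin n) D} {x z : Fin n → D}
    (hxz : LinearIndependent D ![x, z]) (hx : x ∈ LinearMap.range A.vecMulLinear)
    (hz : z ∈ LinearMap.range A.vecMulLinear) : 2 ≤ rk A := by
  rw [rk_eq_finrank_range]
  have hspan : Submodule.span D (Set.range ![x, z]) ≤ LinearMap.range A.vecMulLinear := by
    rw [Submodule.span_le, Matrix.range_cons, Matrix.range_cons, Matrix.range_empty]
    simp [Set.insert_subset_iff, hx, hz]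
  simpa [finrank_span_eq_card hxz] using Submodule.finrank_mono hspan

lemma rk_vecMulVec_le_one (a : Fin m → D) (b : Fin n → D) : rk (vecMulVec a b) ≤ 1 := by
  rw [rk_eq_finrank_range]
  have hle : LinearMap.range (vecMulVec a b).vecMulLinear ≤ D ∙ b := by
    rintro _ ⟨t, rfl⟩
    simpa [vecMul_vecMulVec] using
      Submodule.smul_mem _ (t ⬝ᵥ a) (Submodule.mem_span_singleton_self b)
  refine (Submodule.finrank_mono hle).trans ?_
  simpa using finrank_span_le_card ({b} : Set (Fin n → D))

lemma rk_vecMulVec {a : Fin m → D} {b : Fin n → D} (ha : a ≠ 0) (hb : b ≠ 0) :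
    rk (vecMulVec a b) = 1 := by
  obtain ⟨i, hi⟩ := Function.ne_iff.1 ha
  obtain ⟨j, hj⟩ := Function.ne_iff.1 hb
  have hne : vecMulVec a b ≠ 0 := fun h =>
    mul_ne_zero hi hj (by simpa [vecMulVec_apply] using congrFun₂ h i j)
  have := rk_vecMulVec_le_one a b
  have := rk_eq_zero_iff.not.2 hne
  omega

end Rank

section RankOne

variable {D : Type*} [DivisionRing D] {m n : ℕ}

lemma exists_eq_sum_vecMulVec (A : Matrix (Fin m) (Fin n) D) :
    ∃ (a : Fin (rk A) → Fin m → D) (b : Fin (rk A) → Fin n → D),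
      A = ∑ j, vecMulVec (a j) (b j) := by
  let V := Submodule.span D (Set.range fun i => A i)
  let β : Module.Basis (Fin (rk A)) D V := Module.finBasisOfFinrankEq D V rfl
  let row : Fin m → V := fun i => ⟨A i, Submodule.subset_span ⟨i, rfl⟩⟩
  refine ⟨fun j i => β.repr (row i) j, fun j => β j, ?_⟩
  ext i k
  have h := congrArg (fun v : V => (v : Fin n → D) k) (β.sum_repr (row i))
  simp only [Submodule.coe_sum, Submodule.coe_smul, Finset.sum_apply, Pi.smul_apply,
    smul_eq_mul] at h
  simpa [Matrix.sum_apply, vecMulVec_apply] using h.symm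

lemma exists_eq_vecMulVec_of_rk_le_one {A : Matrix (Fin m) (Fin n) D} (h : rk A ≤ 1) :
    ∃ a b, A = vecMulVec a b := by
  rcases Nat.le_one_iff_eq_zero_or_eq_one.1 h with h | h
  · exact ⟨0, 0, by simpa using rk_eq_zero_iff.1 h⟩
  · obtain ⟨a, b, hA⟩ := exists_eq_sum_vecMulVec A
    revert a b
    rw [h]
    exact fun a b hA => ⟨a 0, b 0, by simpa using hA⟩

lemma exists_op_smul_eq_of_vecMulVec_eq {a a' : Fin m → D} {b r : Fin n → D} (hb : b ≠ 0)
    (h : vecMulVec a' b = vecMulVec a r) : ∃ c : D, MulOpposite.op c • a = a' := by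
  obtain ⟨j, hj⟩ := Function.ne_iff.1 hb
  refine ⟨r j * (b j)⁻¹, funext fun i => ?_⟩
  have hij : a' i * b j = a i * r j := by simpa [vecMulVec_apply] using congrFun₂ h i j
  rw [Pi.smul_apply, op_smul_eq_mul, ← mul_assoc, ← hij, mul_assoc,
    mul_inv_cancel₀ hj, mul_one]

lemma exists_smul_eq_of_vecMulVec_eq {a c : Fin m → D} {b b' : Fin n → D} (ha : a ≠ 0)
    (h : vecMulVec a b' = vecMulVec c b) : ∃ d : D, d • b = b' := by
  obtain ⟨i, hi⟩ := Function.ne_iff.1 ha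
  refine ⟨(a i)⁻¹ * c i, funext fun j => ?_⟩
  have hij : a i * b' j = c i * b j := by simpa [vecMulVec_apply] using congrFun₂ h i j
  rw [Pi.smul_apply, smul_eq_mul, mul_assoc, ← hij, ← mul_assoc, inv_mul_cancel₀ hi, one_mul]

lemma exists_dotProduct_eq_zero_eq_one {a y : Fin m → D} (ha : a ≠ 0)
    (hy : ∀ c : D, MulOpposite.op c • a ≠ y) : ∃ s, s ⬝ᵥ a = 0 ∧ s ⬝ᵥ y = 1 := by
  obtain ⟨i₀, hi₀⟩ := Function.ne_iff.1 ha
  set k := (a i₀)⁻¹ * y i₀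
  obtain ⟨i₁, hi₁⟩ : ∃ i, y i - a i * k ≠ 0 := by
    by_contra! h
    exact hy k (funext fun i => by simpa [sub_eq_zero, eq_comm] using h i)
  refine ⟨(y i₁ - a i₁ * k)⁻¹ • (Pi.single i₁ 1 - Pi.single i₀ (a i₁ * (a i₀)⁻¹)), ?_, ?_⟩
  · simp [sub_dotProduct, mul_assoc, inv_mul_cancel₀ hi₀]
  · simp only [smul_dotProduct, sub_dotProduct, single_dotProduct, one_mul, smul_eq_mul]
    rw [mul_assoc, ← inv_mul_cancel₀ hi₁]

lemma exists_ne_dotProduct_eq_one (hn : 2 ≤ n) {w : Fin n → D} (hw : w ≠ 0) :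
    ∃ x y, x ≠ y ∧ x ⬝ᵥ w = 1 ∧ y ⬝ᵥ w = 1 := by
  obtain ⟨i, hi⟩ := Function.ne_iff.1 hw
  obtain ⟨j, hj⟩ := Fintype.exists_ne_of_one_lt_card (by rw [Fintype.card_fin]; omega) i
  refine ⟨Pi.single i (w i)⁻¹, Pi.single i (w i)⁻¹ + Pi.single j 1 - Pi.single i (w j * (w i)⁻¹),
    fun h => ?_, by simp [inv_mul_cancel₀ hi], ?_⟩
  · simpa [hj] using congrFun h j
  · simp [add_dotProduct, sub_dotProduct, mul_assoc, inv_mul_cancel₀ hi]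

lemma exists_ne_dotProduct_eq_one' (hn : 2 ≤ n) {w : Fin n → D} (hw : w ≠ 0) :
    ∃ x y, x ≠ y ∧ w ⬝ᵥ x = 1 ∧ w ⬝ᵥ y = 1 := by
  obtain ⟨i, hi⟩ := Function.ne_iff.1 hw
  obtain ⟨j, hj⟩ := Fintype.exists_ne_of_one_lt_card (by rw [Fintype.card_fin]; omega) i
  refine ⟨Pi.single i (w i)⁻¹, Pi.single i (w i)⁻¹ + Pi.single j 1 - Pi.single i ((w i)⁻¹ * w j),
    fun h => ?_, by simp [mul_inv_cancel₀ hi], ?_⟩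
  · simpa [hj] using congrFun h j
  · simp [dotProduct_add, dotProduct_sub, ← mul_assoc, mul_inv_cancel₀ hi]

end RankOne

section TwoRankOne

variable {D : Type*} [DivisionRing D] {m n : ℕ}

lemma two_le_rk_vecMulVec_sub_vecMulVec {a y : Fin m → D} {x z : Fin n → D} (ha : a ≠ 0)
    (hy : ∀ c : D, MulOpposite.op c • a ≠ y) (hxz : LinearIndependent D ![x, z]) :
    2 ≤ rk (vecMulVec a x - vecMulVec y z) := by
  have hvecMul : ∀ t, t ᵥ* (vecMulVec a x - vecMulVec y z) = (t ⬝ᵥ a) • x - (t ⬝ᵥ y) • z :=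
    fun t => by rw [vecMul_sub, vecMul_vecMulVec, vecMul_vecMulVec]
  have hy0 : y ≠ 0 := by simpa [eq_comm] using hy 0
  have ha' : ∀ c : D, MulOpposite.op c • y ≠ a := by
    rintro c rfl
    refine hy c⁻¹ ?_
    rcases eq_or_ne c 0 with rfl | hc
    · simp at ha
    · rw [smul_smul, ← MulOpposite.op_mul, mul_inv_cancel₀ hc, MulOpposite.op_one, one_smul]
  obtain ⟨s, hsa, hsy⟩ := exists_dotProduct_eq_zero_eq_one ha hy
  obtain ⟨t, hty, hta⟩ := exists_dotProduct_eq_zero_eq_one hy0 ha'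
  refine two_le_rk_of_mem_range hxz ⟨t, ?_⟩ ⟨-s, ?_⟩
  · rw [vecMulLinear_apply, hvecMul, hta, hty]
    simp
  · rw [vecMulLinear_apply, neg_vecMul, hvecMul, hsa, hsy]
    simp

lemma eq_of_rk_sub_vecMulVec_smul_lt {Z : Matrix (Fin m) (Fin n) D} {p : Fin m → D}
    {q : Fin n → D} {d₁ d₂ : D} (h₁ : rk (Z - vecMulVec p (d₁ • q)) < rk Z)
    (h₂ : rk (Z - vecMulVec p (d₂ • q)) < rk Z) : d₁ = d₂ := by
  by_contra hd
  -- a left-kernel vector of `W₁` not killing `Z` puts `q` in the row space of `W₂`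
  set W₁ := Z - vecMulVec p (d₁ • q)
  set W₂ := Z - vecMulVec p (d₂ • q)
  obtain ⟨t, htW, htZ⟩ : ∃ t, t ᵥ* W₁ = 0 ∧ t ᵥ* Z ≠ 0 := by
    by_contra! h
    exact h₁.not_ge (rk_le_of_ker_le fun t ht => h t ht)
  have htZ' : t ᵥ* Z = (t ⬝ᵥ p * d₁) • q := by
    simpa [W₁, vecMul_sub, vecMul_vecMulVec, sub_eq_zero, smul_smul] using htW
  have htp : t ⬝ᵥ p ≠ 0 := fun h => htZ (by simp [htZ', h])
  have hq : q ∈ LinearMap.range W₂.vecMulLinear := by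
    have htW₂ : t ᵥ* W₂ = (t ⬝ᵥ p * (d₁ - d₂)) • q := by
      simp [W₂, vecMul_sub, vecMul_vecMulVec, htZ', smul_smul, mul_sub, sub_smul]
    refine ⟨(t ⬝ᵥ p * (d₁ - d₂))⁻¹ • t, ?_⟩
    rw [map_smul, vecMulLinear_apply, htW₂, smul_smul,
      inv_mul_cancel₀ (mul_ne_zero htp (sub_ne_zero.2 hd)), one_smul]
  refine h₂.not_ge (rk_le_of_range_le ?_)
  rintro _ ⟨s, rfl⟩
  have hs : s ᵥ* Z = s ᵥ* W₂ + (s ⬝ᵥ p * d₂) • q := by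
    simp [W₂, vecMul_sub, vecMul_vecMulVec, smul_smul]
  rw [vecMulLinear_apply, hs]
  exact Submodule.add_mem _ (vecMul_mem_range s W₂) (Submodule.smul_mem _ _ hq)

end TwoRankOne

section GraphHom

variable {D D' : Type*} [DivisionRing D] [DivisionRing D'] {m n m' n' : ℕ}
  {φ : Matrix (Fin m) (Fin n) D → Matrix (Fin m') (Fin n') D'}

lemma IsGraphHom.rk_sub_le_one (hφ : IsGraphHom φ) {X Y : Matrix (Fin m) (Fin n) D}
    (h : rk (X - Y) ≤ 1) : rk (φ X - φ Y) ≤ 1 := by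
  rcases Nat.le_one_iff_eq_zero_or_eq_one.1 h with h | h
  · rw [rk_eq_zero_iff, sub_eq_zero] at h
    simp [h]
  · exact (hφ X Y h).le

/-- The partial sums of a decomposition of `X - Y` into `rk (X - Y)` rank-one matrices form a walk
of adjacent steps from `Y` to `X`. -/
lemma IsGraphHom.rk_sub_le (hφ : IsGraphHom φ) (X Y : Matrix (Fin m) (Fin n) D) :
    rk (φ X - φ Y) ≤ rk (X - Y) := by
  obtain ⟨a, b, hXY⟩ := exists_eq_sum_vecMulVec (X - Y)
  have key : ∀ s : Finset (Fin (rk (X - Y))),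
      rk (φ (Y + ∑ j ∈ s, vecMulVec (a j) (b j)) - φ Y) ≤ s.card := by
    intro s
    induction s using Finset.induction_on with
    | empty => simp
    | insert j s hj ih =>
      rw [Finset.sum_insert hj, Finset.card_insert_of_notMem hj, add_left_comm]
      refine (rk_sub_le_add _ (φ (Y + ∑ j ∈ s, vecMulVec (a j) (b j))) _).trans ?_
      rw [add_comm s.card]
      refine add_le_add (hφ.rk_sub_le_one ?_) ih
      simpa using rk_vecMulVec_le_one (a j) (b j)
  simpa [← hXY] using key Finset.univ

end GraphHom

section MaxSets

variable {D : Type*} [DivisionRing D] {m n : ℕ}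

/-- For `u, v ≠ 0`, `colSet u = {u rᵀ}` and `rowSet v = {c vᵀ}` are the maximal sets through `0`
of type one and of type two. -/
def colSet (u : Fin m → D) : Set (Matrix (Fin m) (Fin n) D) :=
  Set.range (vecMulVec u)

def rowSet (v : Fin n → D) : Set (Matrix (Fin m) (Fin n) D) :=
  Set.range fun c => vecMulVec c v

lemma isAdjSet_colSet {u : Fin m → D} (hu : u ≠ 0) :
    IsAdjSet (colSet u : Set (Matrix (Fin m) (Fin n) D)) := by
  refine ⟨⟨0, 0, vecMulVec_zero_right u⟩, ?_⟩
  rintro _ ⟨r, rfl⟩ _ ⟨r', rfl⟩ hne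
  rw [← vecMulVec_sub]
  exact rk_vecMulVec hu (sub_ne_zero.2 fun h => hne (h ▸ rfl))

lemma isAdjSet_rowSet {v : Fin n → D} (hv : v ≠ 0) :
    IsAdjSet (rowSet v : Set (Matrix (Fin m) (Fin n) D)) := by
  refine ⟨⟨0, 0, zero_vecMulVec v⟩, ?_⟩
  rintro _ ⟨c, rfl⟩ _ ⟨c', rfl⟩ hne
  rw [← sub_vecMulVec]
  exact rk_vecMulVec (sub_ne_zero.2 fun h => hne (h ▸ rfl)) hv

lemma colSet_subset_colSet {u₁ u₂ : Fin m → D} {X : Matrix (Fin m) (Fin n) D}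
    (h₁ : X ∈ colSet u₁) (h₂ : X ∈ colSet u₂) (hX : X ≠ 0) :
    (colSet u₁ : Set (Matrix (Fin m) (Fin n) D)) ⊆ colSet u₂ := by
  obtain ⟨r₁, rfl⟩ := h₁
  obtain ⟨r₂, h⟩ := h₂
  obtain ⟨c, rfl⟩ := exists_op_smul_eq_of_vecMulVec_eq (by rintro rfl; simp at hX) h.symm
  rintro _ ⟨s, rfl⟩
  exact ⟨c • s, vecMulVec_smul' u₂ c s⟩

lemma rowSet_subset_rowSet {v₁ v₂ : Fin n → D} {X : Matrix (Fin m) (Fin n) D}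
    (h₁ : X ∈ rowSet v₁) (h₂ : X ∈ rowSet v₂) (hX : X ≠ 0) :
    (rowSet v₁ : Set (Matrix (Fin m) (Fin n) D)) ⊆ rowSet v₂ := by
  obtain ⟨c₁, rfl⟩ := h₁
  obtain ⟨c₂, h⟩ := h₂
  obtain ⟨d, rfl⟩ := exists_smul_eq_of_vecMulVec_eq (by rintro rfl; simp at hX) h.symm
  rintro _ ⟨s, rfl⟩
  exact ⟨MulOpposite.op d • s, (vecMulVec_smul' s d v₂).symm⟩

lemma exists_eq_vecMulVec_smul_of_mem_colSet_inter_rowSet {p : Fin m → D} {q : Fin n → D}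
    {X : Matrix (Fin m) (Fin n) D} (hX : X ∈ colSet p ∩ rowSet q) :
    ∃ d : D, X = vecMulVec p (d • q) := by
  obtain ⟨⟨r, rfl⟩, ⟨c, hc⟩⟩ := hX
  rcases eq_or_ne p 0 with rfl | hp
  · exact ⟨0, by simp⟩
  · obtain ⟨d, rfl⟩ := exists_smul_eq_of_vecMulVec_eq hp hc.symm
    exact ⟨d, rfl⟩

lemma IsAdjSet.subset_colSet_or_subset_rowSet [NeZero m] {S : Set (Matrix (Fin m) (Fin n) D)}
    (hS : IsAdjSet S) (h0 : 0 ∈ S) :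
    (∃ u ≠ 0, S ⊆ colSet u) ∨ (∃ v ≠ 0, S ⊆ rowSet v) := by
  have hrk : ∀ X ∈ S, rk X ≤ 1 := fun X hX => by
    rcases eq_or_ne X 0 with rfl | hX0
    · simp
    · simpa using (hS.2 X hX 0 h0 hX0).le
  by_cases hS0 : S ⊆ {0}
  · obtain ⟨u, hu⟩ := exists_ne (0 : Fin m → D)
    exact Or.inl ⟨u, hu, hS0.trans (Set.singleton_subset_iff.2 ⟨0, by simp⟩)⟩
  obtain ⟨A, hAS, hA0⟩ := Set.not_subset.1 hS0
  obtain ⟨a, b, rfl⟩ := exists_eq_vecMulVec_of_rk_le_one (hrk A hAS)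
  have ha : a ≠ 0 := by rintro rfl; simp at hA0
  have hb : b ≠ 0 := by rintro rfl; simp at hA0
  have hcol : ∀ (a' : Fin m → D) (b' : Fin n → D), vecMulVec a' b' ∉ colSet a →
      ∀ c : D, MulOpposite.op c • a ≠ a' :=
    fun a' b' h c hc => h ⟨c • b', by rw [← hc]; exact vecMulVec_smul' a c b'⟩
  have hrow : ∀ (a' : Fin m → D) (b' : Fin n → D), vecMulVec a' b' ∉ rowSet b →
      LinearIndependent D ![b, b'] :=
    fun a' b' h => (LinearIndependent.pair_iff' hb).2 fun c hc =>
      h ⟨MulOpposite.op c • a', by rw [← hc]; exact (vecMulVec_smul' a' c b).symm⟩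
  have hcover : ∀ X ∈ S, X ∈ colSet a ∨ X ∈ rowSet b := by
    intro X hX
    by_contra! hX'
    obtain ⟨a', b', rfl⟩ := exists_eq_vecMulVec_of_rk_le_one (hrk X hX)
    have := two_le_rk_vecMulVec_sub_vecMulVec ha (hcol _ _ hX'.1) (hrow _ _ hX'.2)
    rw [hS.2 _ hAS _ hX fun h => hX'.1 (h ▸ ⟨b, rfl⟩)] at this
    omega
  by_cases hSa : S ⊆ colSet a
  · exact Or.inl ⟨a, ha, hSa⟩
  obtain ⟨_, hYS, hYa⟩ := Set.not_subset.1 hSa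
  obtain ⟨y, rfl⟩ := (hcover _ hYS).resolve_left hYa
  refine Or.inr ⟨b, hb, fun X hX => by_contra fun hXb => ?_⟩
  obtain ⟨x, rfl⟩ := (hcover X hX).resolve_right hXb
  have := two_le_rk_vecMulVec_sub_vecMulVec ha (hcol _ _ hYa)
    (LinearIndependent.pair_symm_iff.1 (hrow _ _ hXb))
  rw [hS.2 _ hX _ hYS fun h => hYa (h ▸ ⟨x, rfl⟩)] at this
  omega

lemma IsMaxSet.eq_colSet_or_eq_rowSet [NeZero m] {S : Set (Matrix (Fin m) (Fin n) D)}
    (hS : IsMaxSet S) (h0 : 0 ∈ S) :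
    (∃ u ≠ 0, S = colSet u) ∨ (∃ v ≠ 0, S = rowSet v) := by
  rcases hS.1.subset_colSet_or_subset_rowSet h0 with ⟨u, hu, h⟩ | ⟨v, hv, h⟩
  · exact Or.inl ⟨u, hu, (hS.2 _ (isAdjSet_colSet hu) h).symm⟩
  · exact Or.inr ⟨v, hv, (hS.2 _ (isAdjSet_rowSet hv) h).symm⟩

lemma IsMaxSet.eq_of_subset [NeZero m] {S T K : Set (Matrix (Fin m) (Fin n) D)}
    (hS : IsMaxSet S) (hT : IsMaxSet T) (hK0 : 0 ∈ K) (hK : ∀ p q, ¬ K ⊆ colSet p ∩ rowSet q)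
    (hKS : K ⊆ S) (hKT : K ⊆ T) : S = T := by
  obtain ⟨X, hXK, hX0⟩ : ∃ X ∈ K, X ≠ 0 := by
    by_contra! h
    exact hK 0 0 fun X hX => ⟨⟨0, by simp [h X hX]⟩, ⟨0, by simp [h X hX]⟩⟩
  rcases hS.eq_colSet_or_eq_rowSet (hKS hK0) with ⟨u₁, -, rfl⟩ | ⟨v₁, -, rfl⟩ <;>
    rcases hT.eq_colSet_or_eq_rowSet (hKT hK0) with ⟨u₂, -, rfl⟩ | ⟨v₂, -, rfl⟩
  · exact (hS.2 _ hT.1 (colSet_subset_colSet (hKS hXK) (hKT hXK) hX0)).symm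
  · exact (hK u₁ v₂ (Set.subset_inter hKS hKT)).elim
  · exact (hK u₂ v₁ (Set.subset_inter hKT hKS)).elim
  · exact (hS.2 _ hT.1 (rowSet_subset_rowSet (hKS hXK) (hKT hXK) hX0)).symm

end MaxSets

section Lines

variable {D : Type*} [DivisionRing D] {m n : ℕ}

lemma mul_eq_vecMulVec_of_mem_M1set [NeZero m] {k : ℕ} (P : Matrix (Fin k) (Fin m) D)
    {Y : Matrix (Fin m) (Fin n) D} (hY : Y ∈ M1set D m n) :
    P * Y = vecMulVec (fun i => P i 0) (Y 0) := by
  ext i j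
  rw [mul_apply, Finset.sum_eq_single 0 (fun l _ hl => by rw [hY l j (Fin.val_ne_zero_iff.2 hl),
    mul_zero]) (by simp)]
  rfl

lemma mul_eq_vecMulVec_of_mem_N1set [NeZero n] {k : ℕ} (Q : Matrix (Fin n) (Fin k) D)
    {Y : Matrix (Fin m) (Fin n) D} (hY : Y ∈ N1set D m n) :
    Y * Q = vecMulVec (fun i => Y i 0) (Q 0) := by
  ext i j
  rw [mul_apply, Finset.sum_eq_single 0 (fun l _ hl => by rw [hY i l (Fin.val_ne_zero_iff.2 hl),
    zero_mul]) (by simp)]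
  rfl

lemma IsTypeOne.exists_subset_colSet [NeZero m] {S : Set (Matrix (Fin m) (Fin n) D)}
    (hS : IsTypeOne S) (h0 : 0 ∈ S) : ∃ p, S ⊆ colSet p := by
  obtain ⟨P, A, -, rfl⟩ := hS
  obtain ⟨X₀, hX₀, hA⟩ := h0
  obtain rfl := eq_neg_of_add_eq_zero_right hA
  refine ⟨fun i => P i 0, ?_⟩
  rintro _ ⟨X, hX, rfl⟩
  refine ⟨(X - X₀) 0, ?_⟩
  dsimp only
  rw [← sub_eq_add_neg, ← Matrix.mul_sub,
    mul_eq_vecMulVec_of_mem_M1set P fun i j hi => by simp [hX i j hi, hX₀ i j hi]]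

lemma IsTypeTwo.exists_subset_rowSet [NeZero n] {S : Set (Matrix (Fin m) (Fin n) D)}
    (hS : IsTypeTwo S) (h0 : 0 ∈ S) : ∃ q, S ⊆ rowSet q := by
  obtain ⟨Q, A, -, rfl⟩ := hS
  obtain ⟨X₀, hX₀, hA⟩ := h0
  obtain rfl := eq_neg_of_add_eq_zero_right hA
  refine ⟨Q 0, ?_⟩
  rintro _ ⟨X, hX, rfl⟩
  refine ⟨fun i => (X - X₀) i 0, ?_⟩
  dsimp only
  rw [← sub_eq_add_neg, ← Matrix.sub_mul,
    mul_eq_vecMulVec_of_mem_N1set Q fun i j hj => by simp [hX i j hj, hX₀ i j hj]]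

lemma IsLine.exists_subset_colSet_inter_rowSet [NeZero m] [NeZero n]
    {M ℓ : Set (Matrix (Fin m) (Fin n) D)} (hℓ : IsLine M ℓ) (h0 : 0 ∈ ℓ) :
    ∃ p q, ℓ ⊆ colSet p ∩ rowSet q := by
  obtain ⟨N, hMN | hMN, -, rfl⟩ := hℓ
  · obtain ⟨p, hp⟩ := hMN.1.exists_subset_colSet h0.1
    obtain ⟨q, hq⟩ := hMN.2.exists_subset_rowSet h0.2
    exact ⟨p, q, Set.inter_subset_inter hp hq⟩
  · obtain ⟨q, hq⟩ := hMN.1.exists_subset_rowSet h0.1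
    obtain ⟨p, hp⟩ := hMN.2.exists_subset_colSet h0.2
    exact ⟨p, q, fun X hX => ⟨hp hX.2, hq hX.1⟩⟩

end Lines

section FullRank

variable {D : Type*} [DivisionRing D] {n : ℕ}

lemma exists_ne_mem_colSet_rk_sub_lt {A : Matrix (Fin n) (Fin n) D} {u : Fin n → D} (hn : 2 ≤ n)
    (hA : rk A = n) (hu : u ≠ 0) :
    ∃ B₁ ∈ colSet u, ∃ B₂ ∈ colSet u, B₁ ≠ B₂ ∧ rk (A - B₁) < n ∧ rk (A - B₂) < n := by
  obtain ⟨t₁, t₂, hne, ht₁, ht₂⟩ := exists_ne_dotProduct_eq_one hn hu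
  have hlt : ∀ t, t ⬝ᵥ u = 1 → rk (A - vecMulVec u (t ᵥ* A)) < n := fun t ht =>
    rk_lt_of_vecMul_eq_zero (t := t) (by rintro rfl; simp at ht)
      (by simp [vecMul_sub, vecMul_vecMulVec, ht])
  refine ⟨_, ⟨t₁ ᵥ* A, rfl⟩, _, ⟨t₂ ᵥ* A, rfl⟩, fun h => hne (vecMul_injective_of_rk_eq hA ?_),
    hlt t₁ ht₁, hlt t₂ ht₂⟩
  simpa [vecMul_vecMulVec, ht₁] using congrArg (t₁ ᵥ* ·) h

lemma exists_ne_mem_rowSet_rk_sub_lt {A : Matrix (Fin n) (Fin n) D} {v : Fin n → D} (hn : 2 ≤ n)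
    (hA : rk A = n) (hv : v ≠ 0) :
    ∃ B₁ ∈ rowSet v, ∃ B₂ ∈ rowSet v, B₁ ≠ B₂ ∧ rk (A - B₁) < n ∧ rk (A - B₂) < n := by
  obtain ⟨s, rfl⟩ := vecMul_surjective_of_rk_eq hA v
  have hs : s ≠ 0 := by rintro rfl; simp at hv
  obtain ⟨c₁, c₂, hne, hc₁, hc₂⟩ := exists_ne_dotProduct_eq_one' hn hs
  have hlt : ∀ c, s ⬝ᵥ c = 1 → rk (A - vecMulVec c (s ᵥ* A)) < n := fun c hc =>
    rk_lt_of_vecMul_eq_zero hs (by simp [vecMul_sub, vecMul_vecMulVec, hc])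
  refine ⟨_, ⟨c₁, rfl⟩, _, ⟨c₂, rfl⟩, fun h => hne (funext fun i => ?_), hlt c₁ hc₁, hlt c₂ hc₂⟩
  obtain ⟨j, hj⟩ := Function.ne_iff.1 hv
  exact mul_right_cancel₀ hj (by simpa [vecMulVec_apply] using congrFun₂ h i j)

lemma IsMaxSet.exists_ne_rk_sub_lt {M : Set (Matrix (Fin n) (Fin n) D)}
    {A : Matrix (Fin n) (Fin n) D} (hn : 2 ≤ n) (hA : rk A = n) (hM : IsMaxSet M) (h0 : 0 ∈ M) :
    ∃ B₁ ∈ M, ∃ B₂ ∈ M, B₁ ≠ B₂ ∧ rk (A - B₁) < n ∧ rk (A - B₂) < n := by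
  have : NeZero n := ⟨by omega⟩
  rcases hM.eq_colSet_or_eq_rowSet h0 with ⟨u, hu, rfl⟩ | ⟨v, hv, rfl⟩
  exacts [exists_ne_mem_colSet_rk_sub_lt hn hA hu, exists_ne_mem_rowSet_rk_sub_lt hn hA hv]

lemma IsGraphHom.image_not_subset_colSet_inter_rowSet {D' : Type*} [DivisionRing D'] {m' n' : ℕ}
    {φ : Matrix (Fin n) (Fin n) D → Matrix (Fin m') (Fin n') D'} (hφ : IsGraphHom φ)
    (hφ0 : φ 0 = 0) (hn : 2 ≤ n) {A : Matrix (Fin n) (Fin n) D} (hA : rk (φ A) = n)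
    {M : Set (Matrix (Fin n) (Fin n) D)} (hM : IsMaxSet M) (h0 : 0 ∈ M) (p : Fin m' → D')
    (q : Fin n' → D') : ¬ φ '' M ⊆ colSet p ∩ rowSet q := by
  intro hsub
  have hrkA : rk A = n := le_antisymm (rk_le_rows A) (by simpa [hφ0, hA] using hφ.rk_sub_le A 0)
  obtain ⟨B₁, hB₁, B₂, hB₂, hne, h₁, h₂⟩ := hM.exists_ne_rk_sub_lt hn hrkA h0
  obtain ⟨d₁, hd₁⟩ := exists_eq_vecMulVec_smul_of_mem_colSet_inter_rowSet (hsub ⟨B₁, hB₁, rfl⟩)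
  obtain ⟨d₂, hd₂⟩ := exists_eq_vecMulVec_smul_of_mem_colSet_inter_rowSet (hsub ⟨B₂, hB₂, rfl⟩)
  have hlt : ∀ B, rk (A - B) < n → rk (φ A - φ B) < rk (φ A) :=
    fun B h => hA ▸ (hφ.rk_sub_le A B).trans_lt h
  have hd := eq_of_rk_sub_vecMulVec_smul_lt (hd₁ ▸ hlt B₁ h₁) (hd₂ ▸ hlt B₂ h₂)
  have := hφ B₁ B₂ (hM.1.2 B₁ hB₁ B₂ hB₂ hne)
  rw [hd₁, hd₂, hd, sub_self, rk_zero] at this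
  exact zero_ne_one this

end FullRank

theorem stmt17_general {D D' : Type*} [DivisionRing D] [DivisionRing D'] {n m' n' : ℕ}
    (hn : 2 ≤ n)
    (φ : Matrix (Fin n) (Fin n) D → Matrix (Fin m') (Fin n') D')
    (hhom : IsGraphHom φ) (h0 : φ 0 = 0)
    (A₀ : Matrix (Fin n) (Fin n) D) (hA₀ : rk (φ A₀) = n)
    (M : Set (Matrix (Fin n) (Fin n) D)) (hM : IsMaxSet M)
    (h0M : (0 : Matrix (Fin n) (Fin n) D) ∈ M)
    (M' : Set (Matrix (Fin m') (Fin n') D')) (hM' : IsMaxSet M')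
    (hsub : φ '' M ⊆ M') :
    (∀ ℓ : Set (Matrix (Fin m') (Fin n') D'), IsLine M' ℓ → ¬ φ '' M ⊆ ℓ) ∧
    (∀ S : Set (Matrix (Fin m') (Fin n') D'), IsMaxSet S → φ '' M ⊆ S → S = M') := by
  have : NeZero m' := ⟨by have := rk_le_rows (φ A₀); omega⟩
  have : NeZero n' := ⟨by have := rk_le_cols (φ A₀); omega⟩
  have hK := hhom.image_not_subset_colSet_inter_rowSet h0 hn hA₀ hM h0M
  have h0K : (0 : Matrix (Fin m') (Fin n') D') ∈ φ '' M := ⟨0, h0M, h0⟩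
  refine ⟨fun ℓ hℓ hMℓ => ?_, fun S hS hMS => hS.eq_of_subset hM' h0K hK hMS hsub⟩
  obtain ⟨p, q, hpq⟩ := hℓ.exists_subset_colSet_inter_rowSet (hMℓ h0K)
  exact hK p q (hMℓ.trans hpq)

/-- (Lemma `Recastatre43`) the image of a maximal set through `0` is not
contained in any line of `AG(M')`, and `M'` is the unique maximal set containing it. -/
theorem stmt17 {D D' : Type*} [DivisionRing D] [DivisionRing D'] {n m' n' : ℕ}
    (hn : 2 ≤ n) (hm' : n ≤ m') (hn' : n ≤ n')
    (φ : Matrix (Fin n) (Fin n) D → Matrix (Fin m') (Fin n') D')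
    (hhom : IsGraphHom φ) (h0 : φ 0 = 0)
    (A₀ : Matrix (Fin n) (Fin n) D) (hA₀ : rk (φ A₀) = n)
    (M : Set (Matrix (Fin n) (Fin n) D)) (hM : IsMaxSet M)
    (h0M : (0 : Matrix (Fin n) (Fin n) D) ∈ M)
    (M' : Set (Matrix (Fin m') (Fin n') D')) (hM' : IsMaxSet M')
    (hsub : φ '' M ⊆ M') :
    (∀ ℓ : Set (Matrix (Fin m') (Fin n') D'), IsLine M' ℓ → ¬ φ '' M ⊆ ℓ) ∧
    (∀ S : Set (Matrix (Fin m') (Fin n') D'), IsMaxSet S → φ '' M ⊆ S → S = M') :=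
  stmt17_general hn φ hhom h0 A₀ hA₀ M hM h0M M' hM' hsub
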